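/- Let ℒ_γ be the space of sequences b = (b_n) of bounded operators with norm ‖b‖_γ = sup_{n≥0} (γⁿ/n!) ‖b_n‖, 0 < γ < 1. Suppose a linear map V acts by (Vb)_s = ∑_{n=0}^{s} (1/n!) ∑_{j₁≠…≠j_n} A_{1+n}(t) applied to b_{s−n} ⊗ identities, with ‖A_{1+n}(t) c‖ ≤ n! e^{n+2} ‖c‖. If γ < e^{−1}, then ‖Vb‖_γ ≤ e² (1 − γe)^{−1} ‖b‖_γ. -/

import Mathlib

open Nat

/-!
Each of the `s!/(s-n)!` terms of order `n` is bounded by `n! eⁿ⁺² ‖b_{s-n}‖`, and the weight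
`γˢ/s!` splits as `γⁿ · γ^{s-n}/(s-n)!` against the count `s!/(s-n)!`, so the `n`-th summand
of `γˢ/s! ‖(Vb)_s‖` is at most `e² (γe)ⁿ ‖b‖_γ`. Summing the geometric series in `γe < 1`
gives the bound.
-/

lemma norm_sum_embedding_le {F : Type*} [SeminormedAddCommGroup F] {n s : ℕ}
    (f : (Fin n ↪ Fin s) → F) {C : ℝ} (hf : ∀ j, ‖f j‖ ≤ C) :
    ‖∑ j, f j‖ ≤ s.descFactorial n * C := by
  calc ‖∑ j, f j‖ ≤ ∑ _j : Fin n ↪ Fin s, C := norm_sum_le_of_le _ fun j _ => hf j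
    _ = s.descFactorial n * C := by
      rw [Finset.sum_const, Finset.card_univ, Fintype.card_embedding_eq, Fintype.card_fin,
        Fintype.card_fin, nsmul_eq_mul]

lemma pow_div_factorial_mul_descFactorial {K : Type*} [Field K] [CharZero K] (x : K)
    {n s : ℕ} (hns : n ≤ s) :
    x ^ s / s ! * s.descFactorial n = x ^ n * (x ^ (s - n) / (s - n)!) := by
  have hfac : ((s - n)! : K) * s.descFactorial n = s ! := by
    exact_mod_cast factorial_mul_descFactorial hns
  have hpow : x ^ s = x ^ n * x ^ (s - n) := by rw [← pow_add, Nat.add_sub_cancel' hns]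
  have hdesc : (s.descFactorial n : K) ≠ 0 := by
    exact_mod_cast (Nat.descFactorial_pos.mpr hns).ne'
  rw [← hfac, hpow]
  field_simp

lemma weighted_norm_embedding_sum_le {F : Type*} [SeminormedAddCommGroup F]
    [NormedSpace ℝ F] {γ : ℝ} (hγ : 0 ≤ γ) {n s : ℕ} (hns : n ≤ s)
    (f : (Fin n ↪ Fin s) → F) {c : ℝ} (hf : ∀ j, ‖f j‖ ≤ n ! * Real.exp (n + 2) * c) :
    γ ^ s / s ! * ‖((n ! : ℝ)⁻¹) • ∑ j, f j‖
      ≤ Real.exp 2 * (γ * Real.exp 1) ^ n * (γ ^ (s - n) / (s - n)! * c) := by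
  have hexp : Real.exp (n + 2) = Real.exp 2 * Real.exp 1 ^ n := by
    rw [Real.exp_add, ← Real.exp_one_pow, mul_comm]
  calc γ ^ s / s ! * ‖((n ! : ℝ)⁻¹) • ∑ j, f j‖
      ≤ γ ^ s / s ! * ((n ! : ℝ)⁻¹ * (s.descFactorial n * (n ! * Real.exp (n + 2) * c))) := by
        rw [norm_smul, norm_inv, Real.norm_natCast]
        gcongr
        exact norm_sum_embedding_le f hf
    _ = Real.exp 2 * (γ * Real.exp 1) ^ n * (γ ^ (s - n) / (s - n)! * c) := by
        rw [hexp]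
        calc _ = γ ^ s / s ! * s.descFactorial n * (Real.exp 2 * Real.exp 1 ^ n * c) := by
              field_simp
          _ = _ := by rw [pow_div_factorial_mul_descFactorial γ hns]; ring

lemma geom_sum_le_inv_one_sub {K : Type*} [Field K] [LinearOrder K] [IsStrictOrderedRing K]
    {x : K} (hx : 0 ≤ x) (h'x : x < 1) (k : ℕ) :
    ∑ i ∈ Finset.range k, x ^ i ≤ (1 - x)⁻¹ := by
  have := geom_sum_Ico_le_of_lt_one (m := 0) (n := k) hx h'x
  rwa [← Finset.range_eq_Ico, pow_zero, one_div] at this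

theorem statement15_general (X : ℕ → Type*) [∀ n, NormedAddCommGroup (X n)]
    [∀ n, NormedSpace ℝ (X n)]
    (γ : ℝ) (hγ0 : 0 < γ) (hγe : γ < (Real.exp 1)⁻¹)
    (A : ∀ s n : ℕ, (Fin n ↪ Fin s) → (X (s - n) →ₗ[ℝ] X s))
    (hA : ∀ (s n : ℕ) (j : Fin n ↪ Fin s) (c : X (s - n)),
      ‖A s n j c‖ ≤ n ! * Real.exp (n + 2) * ‖c‖)
    (b : ∀ n, X n)
    (hb : BddAbove (Set.range fun n => γ ^ n / n ! * ‖b n‖)) :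
    (⨆ s : ℕ, γ ^ s / s ! *
        ‖∑ n ∈ Finset.range (s + 1),
            ((n ! : ℝ)⁻¹) • ∑ j : Fin n ↪ Fin s, A s n j (b (s - n))‖)
      ≤ Real.exp 2 * (1 - γ * Real.exp 1)⁻¹ * ⨆ n : ℕ, γ ^ n / n ! * ‖b n‖ := by
  set M := ⨆ n : ℕ, γ ^ n / n ! * ‖b n‖
  have hM : ∀ m : ℕ, γ ^ m / m ! * ‖b m‖ ≤ M := le_ciSup hb
  have hr1 : γ * Real.exp 1 < 1 := (lt_mul_inv_iff₀ (Real.exp_pos 1)).mp (by rwa [one_mul])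
  refine ciSup_le fun s => ?_
  calc γ ^ s / s ! * ‖∑ n ∈ Finset.range (s + 1),
          ((n ! : ℝ)⁻¹) • ∑ j : Fin n ↪ Fin s, A s n j (b (s - n))‖
      ≤ ∑ n ∈ Finset.range (s + 1),
          γ ^ s / s ! * ‖((n ! : ℝ)⁻¹) • ∑ j : Fin n ↪ Fin s, A s n j (b (s - n))‖ := by
        rw [← Finset.mul_sum]
        gcongr
        exact norm_sum_le _ _
    _ ≤ ∑ n ∈ Finset.range (s + 1), Real.exp 2 * (γ * Real.exp 1) ^ n * M := by
        refine Finset.sum_le_sum fun n hn => ?_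
        grw [weighted_norm_embedding_sum_le hγ0.le (Nat.lt_succ_iff.mp (Finset.mem_range.mp hn))
          _ fun j => hA s n j _, hM]
    _ = Real.exp 2 * (∑ n ∈ Finset.range (s + 1), (γ * Real.exp 1) ^ n) * M := by
        rw [Finset.mul_sum, Finset.sum_mul]
    _ ≤ Real.exp 2 * (1 - γ * Real.exp 1)⁻¹ * M := by
        have hM0 : 0 ≤ M := (by positivity : (0 : ℝ) ≤ γ ^ 0 / 0 ! * ‖b 0‖).trans (hM 0)
        gcongr
        exact geom_sum_le_inv_one_sub (by positivity) hr1 _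

/-- Norm estimate for the reduced-observable solution expansion.  On the space `ℒ_γ` of
sequences `b = (b_n)` with norm `‖b‖_γ = sup_n (γⁿ/n!) ‖b_n‖` (`0 < γ < 1`), the map
`(Vb)_s = ∑_{n=0}^{s} (1/n!) ∑_{j₁ ≠ … ≠ j_n} A_{1+n}(t)(b_{s−n} ⊗ 𝟙)`, with generating
operators bounded by `‖A_{1+n}(t) c‖ ≤ n! e^{n+2} ‖c‖` (the inner sum runs over the
`s!/(s−n)!` tuples of distinct indices, modelled by embeddings `Fin n ↪ Fin s`),
satisfies `‖Vb‖_γ ≤ e² (1 − γe)⁻¹ ‖b‖_γ` whenever `γ < e⁻¹`. -/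
theorem statement15 (X : ℕ → Type*) [∀ n, NormedAddCommGroup (X n)]
    [∀ n, NormedSpace ℝ (X n)]
    (γ : ℝ) (hγ0 : 0 < γ) (hγ1 : γ < 1) (hγe : γ < (Real.exp 1)⁻¹)
    (A : ∀ s n : ℕ, (Fin n ↪ Fin s) → (X (s - n) →ₗ[ℝ] X s))
    (hA : ∀ (s n : ℕ) (j : Fin n ↪ Fin s) (c : X (s - n)),
      ‖A s n j c‖ ≤ n ! * Real.exp (n + 2) * ‖c‖)
    (b : ∀ n, X n)
    (hb : BddAbove (Set.range fun n => γ ^ n / n ! * ‖b n‖)) :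
    (⨆ s : ℕ, γ ^ s / s ! *
        ‖∑ n ∈ Finset.range (s + 1),
            ((n ! : ℝ)⁻¹) • ∑ j : Fin n ↪ Fin s, A s n j (b (s - n))‖)
      ≤ Real.exp 2 * (1 - γ * Real.exp 1)⁻¹ * ⨆ n : ℕ, γ ^ n / n ! * ‖b n‖ :=
  statement15_general X γ hγ0 hγe A hA b hb
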